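/- arXiv:1901.05937 — 5 statements merged into one kernel-verified Lean document; each statement's English description precedes it below -/
import Mathlib

section
/- Let b ≥ 1, λ > 0, C₁ ≥ 0, and let x_1,...,x_m ∈ (0,1). Suppose r : (0,1) → ℝ satisfies 0 ≤ r(u) ≤ 1 for all u ∈ (0,1), and r(u) ≥ 1 − C₁/b for every u ∈ (0,1) with min_{1≤p≤m} |u − x_p| ≥ 2^{−b}. Let y ∈ (0,1) satisfy min_{1≤p≤m} |y − x_p| ≥ √λ + 2^{−b}, and let x̂ be a minimizer over u ∈ (0,1) of L(u) = (y − u)² + λ·r(u). Then min_{1≤p≤m} |x̂ − x_p| ≥ 2^{−b} and (y − x̂)² ≤ λ·C₁/b. -/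
/-- Deterministic core of the structure-estimation lemma for the scalar Q-MAP denoiser:
if the noisy observation `y` is far (≥ √λ + 2^{-b}) from every atom `x p`, then any
minimizer `xhat` of `u ↦ (y-u)² + λ·r(u)` over `(0,1)` stays at distance ≥ 2^{-b} from
every atom and satisfies `(y - xhat)² ≤ λ·C₁/b`. -/
theorem stmt_4 (b : ℕ) (hb : 1 ≤ b) (lam : ℝ) (hlam : 0 < lam) (C1 : ℝ) (hC1 : 0 ≤ C1)
    (m : ℕ) (x : ℕ → ℝ) (hx : ∀ p ∈ Finset.Icc 1 m, x p ∈ Set.Ioo (0 : ℝ) 1)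
    (r : ℝ → ℝ)
    (hr0 : ∀ u ∈ Set.Ioo (0 : ℝ) 1, 0 ≤ r u)
    (hr1 : ∀ u ∈ Set.Ioo (0 : ℝ) 1, r u ≤ 1)
    (hrfar : ∀ u ∈ Set.Ioo (0 : ℝ) 1,
      (∀ p ∈ Finset.Icc 1 m, (2 : ℝ) ^ (-(b : ℤ)) ≤ |u - x p|) → 1 - C1 / b ≤ r u)
    (y : ℝ) (hy : y ∈ Set.Ioo (0 : ℝ) 1)
    (hyfar : ∀ p ∈ Finset.Icc 1 m, Real.sqrt lam + (2 : ℝ) ^ (-(b : ℤ)) ≤ |y - x p|)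
    (xhat : ℝ) (hxhat : xhat ∈ Set.Ioo (0 : ℝ) 1)
    (hmin : ∀ u ∈ Set.Ioo (0 : ℝ) 1,
      (y - xhat) ^ 2 + lam * r xhat ≤ (y - u) ^ 2 + lam * r u) :
    (∀ p ∈ Finset.Icc 1 m, (2 : ℝ) ^ (-(b : ℤ)) ≤ |xhat - x p|) ∧
      (y - xhat) ^ 2 ≤ lam * C1 / b := by
  have hLy := hmin y hy
  simp only [sub_self] at hLy
  -- (y - xhat)^2 + lam * r xhat ≤ lam * r y ≤ lam
  have hle : (y - xhat) ^ 2 + lam * r xhat ≤ lam := by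
    calc (y - xhat) ^ 2 + lam * r xhat ≤ 0 ^ 2 + lam * r y := hLy
    _ = lam * r y := by ring
    _ ≤ lam * 1 := by
        exact mul_le_mul_of_nonneg_left (hr1 y hy) hlam.le
    _ = lam := mul_one lam
  have hsq : (y - xhat) ^ 2 ≤ lam := by
    have := mul_nonneg hlam.le (hr0 xhat hxhat)
    linarith
  have habs : |y - xhat| ≤ Real.sqrt lam := by
    have := Real.sqrt_le_sqrt hsq
    rwa [Real.sqrt_sq_eq_abs] at this
  have hfar : ∀ p ∈ Finset.Icc 1 m, (2 : ℝ) ^ (-(b : ℤ)) ≤ |xhat - x p| := by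
    intro p hp
    have h1 := hyfar p hp
    have h2 : |y - x p| ≤ |y - xhat| + |xhat - x p| := abs_sub_le y xhat (x p)
    linarith
  refine ⟨hfar, ?_⟩
  have hr := hrfar xhat hxhat hfar
  have hbpos : (0 : ℝ) < b := by exact_mod_cast hb
  have : lam * (1 - C1 / b) ≤ lam * r xhat :=
    mul_le_mul_of_nonneg_left hr hlam.le
  have : (y - xhat) ^ 2 ≤ lam * (C1 / b) := by nlinarith
  rw [mul_div_assoc]; exact this
end

section
/- Let x_1,...,x_m ∈ (0,1) be distinct and let C₁, C₂ ≥ 0. Then there exist b₀ ∈ ℕ and σ₀ > 0 (depending only on C₁, C₂ and the points x_p) with the following property. Let b ≥ b₀, 0 < σ ≤ σ₀, λ = σ^{3/2}, and let r : (0,1) → ℝ satisfy: r(u) ≥ 0 for all u; r(u) ≥ 1 − C₁/b whenever min_p |u − x_p| ≥ 2^{−b}; and r(x_p) ≤ C₂/b for all p. Fix p ∈ {1,...,m}, let x = x_p, let z ∈ ℝ with |z| ≤ σ·log(1/σ), y = x + z, and let x̂ be a minimizer over u ∈ (0,1) of (y − u)² + λ·r(u). Then |x̂ − x_p| ≤ 2^{−b}.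 -/
open Filter Topology Asymptotics

/-!
Comparing the objective at `xhat` with its value at the atom `x p` itself gives
`(y - xhat)² + λ r(xhat) ≤ z² + λ C₂/b`. As `z² ≤ σ² log²(1/σ) = o(λ)`, the penalty
`λ r(xhat)` is at most `λ/4 + λ C₂/b < λ (1 - C₁/b)` once `σ` is small and `b` large, so `xhat` cannot be
`2^{-b}`-far from every atom. The same comparison gives `(xhat - x p)² ≤ 4 z² + 2 λ C₂/b = O(λ)`,
so `xhat` lies within half the minimal separation of the atoms from `x p`, and the atom it is
`2^{-b}`-close to must be `x p`.
-/

theorem Set.InjOn.exists_pos_forall_dist_lt_imp_eq {ι X : Type*} [MetricSpace X]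
    {s : Finset ι} {x : ι → X} (hx : Set.InjOn x s) :
    ∃ δ > 0, ∀ p ∈ s, ∀ q ∈ s, dist (x p) (x q) < δ → p = q := by
  have hsep : ∀ᶠ δ in 𝓝[>] (0 : ℝ), ∀ p ∈ s, ∀ q ∈ s, p ≠ q → δ ≤ dist (x p) (x q) := by
    simp only [eventually_all_finset, eventually_imp_distrib_left]
    intro p hp q hq hpq
    exact (eventually_le_nhds (dist_pos.2 fun h => hpq (hx hp hq h))).filter_mono
      nhdsWithin_le_nhds
  obtain ⟨δ, hδ, hδ0⟩ := (hsep.and self_mem_nhdsWithin).exists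
  exact ⟨δ, hδ0, fun p hp q hq h => by_contra fun hpq => (hδ p hp q hq hpq).not_gt h⟩

theorem isLittleO_sq_mul_log_inv_rpow_three_halves :
    (fun σ : ℝ => (σ * Real.log (1 / σ)) ^ 2) =o[𝓝[>] 0] fun σ => σ ^ ((3 : ℝ) / 2) := by
  have hlog : Tendsto (fun σ : ℝ => (Real.log σ * σ ^ ((1 : ℝ) / 4)) ^ 2) (𝓝[>] 0) (𝓝 0) := by
    simpa using (tendsto_log_mul_rpow_nhdsGT_zero (by norm_num : (0 : ℝ) < 1 / 4)).pow 2
  refine ((isBigO_refl (fun σ : ℝ => σ ^ ((3 : ℝ) / 2)) _).mul_isLittleO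
    ((isLittleO_one_iff ℝ).2 hlog)).congr' ?_ (by simp)
  filter_upwards [self_mem_nhdsWithin] with σ (hσ : 0 < σ)
  have hsplit : σ ^ ((3 : ℝ) / 2) * (σ ^ ((1 : ℝ) / 4)) ^ 2 = σ ^ 2 := by
    rw [← Real.rpow_natCast, ← Real.rpow_natCast, ← Real.rpow_mul hσ.le, ← Real.rpow_add hσ]
    norm_num
  rw [show Real.log (1 / σ) = -Real.log σ by simp]
  linear_combination (Real.log σ) ^ 2 * hsplit

theorem eventually_sq_mul_log_inv_le_rpow_three_halves_div_four :
    ∀ᶠ σ in 𝓝[>] (0 : ℝ), (σ * Real.log (1 / σ)) ^ 2 ≤ σ ^ ((3 : ℝ) / 2) / 4 := by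
  filter_upwards [isLittleO_sq_mul_log_inv_rpow_three_halves.bound (by norm_num : (0 : ℝ) < 1 / 4),
    self_mem_nhdsWithin] with σ hbound (hσ : 0 < σ)
  rw [Real.norm_eq_abs, Real.norm_eq_abs, abs_sq, abs_of_pos (by positivity)] at hbound
  linarith

theorem sq_sub_le_of_penalized_le {r : ℝ → ℝ} {lam y u v : ℝ} (hlam : 0 ≤ lam) (hv : 0 ≤ r v)
    (hmin : (y - v) ^ 2 + lam * r v ≤ (y - u) ^ 2 + lam * r u) :
    (v - u) ^ 2 ≤ 2 * (2 * (y - u) ^ 2 + lam * r u) := by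
  nlinarith [mul_nonneg hlam hv, sq_nonneg (2 * y - u - v)]

theorem abs_sub_lt_of_penalized_min {ι : Type*} {s : Finset ι} {x : ι → ℝ} {r : ℝ → ℝ}
    {δ ε a c lam y v : ℝ} {p : ι}
    (hsep : ∀ q ∈ s, ∀ q' ∈ s, |x q - x q'| < δ → q = q') (hε : ε ≤ δ / 2)
    (hlam : 0 ≤ lam) (hv : 0 ≤ r v) (hfar : (∀ q ∈ s, ε ≤ |v - x q|) → a ≤ r v)
    (hp : p ∈ s) (hatom : r (x p) ≤ c)
    (hmin : (y - v) ^ 2 + lam * r v ≤ (y - x p) ^ 2 + lam * r (x p))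
    (hgap : (y - x p) ^ 2 + lam * c < lam * a)
    (hclose : 2 * (2 * (y - x p) ^ 2 + lam * c) < (δ / 2) ^ 2) :
    |v - x p| < ε := by
  have hatom' := mul_le_mul_of_nonneg_left hatom hlam
  obtain ⟨q, hq, hvq⟩ : ∃ q ∈ s, |v - x q| < ε := by
    by_contra! hfar'
    nlinarith [mul_le_mul_of_nonneg_left (hfar hfar') hlam, sq_nonneg (y - v)]
  have hvp : |v - x p| < δ / 2 :=
    abs_lt_of_sq_lt_sq (by linarith [sq_sub_le_of_penalized_le hlam hv hmin])
      (by linarith [abs_nonneg (v - x q)])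
  obtain rfl : q = p := hsep q hq p hp <| calc
    |x q - x p| ≤ |v - x q| + |v - x p| := (abs_sub_le _ v _).trans_eq (by rw [abs_sub_comm (x q)])
    _ < δ := by linarith
  exact hvq

theorem stmt_6_general (m : ℕ) (x : ℕ → ℝ)
    (hx : ∀ p ∈ Finset.Icc 1 m, x p ∈ Set.Ioo (0 : ℝ) 1)
    (hxdist : ∀ p ∈ Finset.Icc 1 m, ∀ p' ∈ Finset.Icc 1 m, x p = x p' → p = p')
    (C1 C2 : ℝ) :
    ∃ b₀ : ℕ, ∃ σ₀ : ℝ, 0 < σ₀ ∧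
      ∀ b : ℕ, b₀ ≤ b → ∀ σ : ℝ, 0 < σ → σ ≤ σ₀ →
        ∀ r : ℝ → ℝ,
          (∀ u ∈ Set.Ioo (0 : ℝ) 1, 0 ≤ r u) →
          (∀ u ∈ Set.Ioo (0 : ℝ) 1,
            (∀ p ∈ Finset.Icc 1 m, (2 : ℝ) ^ (-(b : ℤ)) ≤ |u - x p|) → 1 - C1 / b ≤ r u) →
          (∀ p ∈ Finset.Icc 1 m, r (x p) ≤ C2 / b) →
          ∀ p ∈ Finset.Icc 1 m, ∀ z : ℝ, |z| ≤ σ * Real.log (1 / σ) →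
            ∀ xhat ∈ Set.Ioo (0 : ℝ) 1,
              (∀ u ∈ Set.Ioo (0 : ℝ) 1,
                (x p + z - xhat) ^ 2 + σ ^ ((3 : ℝ) / 2) * r xhat ≤
                  (x p + z - u) ^ 2 + σ ^ ((3 : ℝ) / 2) * r u) →
              |xhat - x p| ≤ (2 : ℝ) ^ (-(b : ℤ)) := by
  obtain ⟨δ, hδ, hsep⟩ := Set.InjOn.exists_pos_forall_dist_lt_imp_eq hxdist
  simp only [Real.dist_eq] at hsep
  have htwo : Tendsto (fun b : ℕ => (2 : ℝ) ^ (-(b : ℤ))) atTop (𝓝 0) := by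
    simpa [← inv_pow] using
      tendsto_pow_atTop_nhds_zero_of_lt_one (r := (2 : ℝ)⁻¹) (by norm_num) (by norm_num)
  have hlam_tendsto : Tendsto (fun σ : ℝ => σ ^ ((3 : ℝ) / 2)) (𝓝[>] 0) (𝓝 0) := by
    simpa using ((Real.continuousAt_rpow_const 0 ((3 : ℝ) / 2) (Or.inr (by norm_num))).tendsto
      |>.mono_left nhdsWithin_le_nhds)
  have hdiv (C : ℝ) : ∀ᶠ b : ℕ in atTop, C / b < 3 / 4 :=
    (tendsto_const_div_atTop_nhds_zero_nat C).eventually (gt_mem_nhds (by norm_num))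
  obtain ⟨b₀, hb₀⟩ := eventually_atTop.1 <|
    (hdiv (C1 + C2)).and <| (hdiv C2).and <| htwo.eventually (ge_mem_nhds (half_pos hδ))
  -- with `z² ≤ λ/4` and `C₂/b < 3/4`, `abs_sub_lt_of_penalized_min` needs `5λ/2 < (δ/2)²`
  obtain ⟨σ₀, hσ₀, hσσ₀⟩ := mem_nhdsGT_iff_exists_Ioc_subset.1 <|
    eventually_sq_mul_log_inv_le_rpow_three_halves_div_four.and
      (hlam_tendsto.eventually (gt_mem_nhds (by positivity : (0 : ℝ) < δ ^ 2 / 10)))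
  refine ⟨b₀, σ₀, hσ₀, fun b hb σ hσ hσle r hr0 hrfar hratom p hp z hz xhat hxhat hmin => ?_⟩
  obtain ⟨hC, hC2, hε⟩ := hb₀ b hb
  obtain ⟨hlog, hlam⟩ := hσσ₀ ⟨hσ, hσle⟩
  have hlam0 : 0 < σ ^ ((3 : ℝ) / 2) := by positivity
  have hz2 : z ^ 2 ≤ σ ^ ((3 : ℝ) / 2) / 4 :=
    (sq_le_sq' (abs_le.1 hz).1 (abs_le.1 hz).2).trans hlog
  refine (abs_sub_lt_of_penalized_min hsep hε hlam0.le (hr0 xhat hxhat) (hrfar xhat hxhat) hp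
    (hratom p hp) (hmin (x p) (hx p hp)) ?_ ?_).le <;> rw [add_sub_cancel_left]
  · rw [add_div] at hC
    nlinarith [mul_pos hlam0 (by linarith : 0 < 3 / 4 - C1 / b - C2 / b)]
  · nlinarith [mul_lt_mul_of_pos_left hC2 hlam0]

/-- Deterministic core of the structure-estimation lemma for the scalar Q-MAP denoiser
when the clean sample sits on an atom `x p`: for `b` large, `σ ≤ σ₀` and `λ = σ^{3/2}`,
if the noise satisfies `|z| ≤ σ·log(1/σ)` then any minimizer `xhat` of
`u ↦ (y-u)² + λ·r(u)` over `(0,1)` (with `y = x p + z`) satisfies `|xhat - x p| ≤ 2^{-b}`. -/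
theorem stmt_6 (m : ℕ) (x : ℕ → ℝ)
    (hx : ∀ p ∈ Finset.Icc 1 m, x p ∈ Set.Ioo (0 : ℝ) 1)
    (hxdist : ∀ p ∈ Finset.Icc 1 m, ∀ p' ∈ Finset.Icc 1 m, x p = x p' → p = p')
    (C1 C2 : ℝ) (hC1 : 0 ≤ C1) (hC2 : 0 ≤ C2) :
    ∃ b₀ : ℕ, ∃ σ₀ : ℝ, 0 < σ₀ ∧
      ∀ b : ℕ, b₀ ≤ b → ∀ σ : ℝ, 0 < σ → σ ≤ σ₀ →
        ∀ r : ℝ → ℝ,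
          (∀ u ∈ Set.Ioo (0 : ℝ) 1, 0 ≤ r u) →
          (∀ u ∈ Set.Ioo (0 : ℝ) 1,
            (∀ p ∈ Finset.Icc 1 m, (2 : ℝ) ^ (-(b : ℤ)) ≤ |u - x p|) → 1 - C1 / b ≤ r u) →
          (∀ p ∈ Finset.Icc 1 m, r (x p) ≤ C2 / b) →
          ∀ p ∈ Finset.Icc 1 m, ∀ z : ℝ, |z| ≤ σ * Real.log (1 / σ) →
            ∀ xhat ∈ Set.Ioo (0 : ℝ) 1,
              (∀ u ∈ Set.Ioo (0 : ℝ) 1,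
                (x p + z - xhat) ^ 2 + σ ^ ((3 : ℝ) / 2) * r xhat ≤
                  (x p + z - u) ^ 2 + σ ^ ((3 : ℝ) / 2) * r u) →
              |xhat - x p| ≤ (2 : ℝ) ^ (-(b : ℤ)) :=
  stmt_6_general m x hx hxdist C1 C2
end

section
/- Let (X_1,X_2) be a pair of random variables in (0,1)² such that X_1 has a density bounded above by M and below by m > 0 on (0,1), and the conditional law of X_2 given X_1 = x is q₀·μ_c + Σ_{p=1}^{m'} q_p·δ_{f_p(x)}, where q₀,...,q_{m'} > 0 sum to 1 and μ_c is absolutely continuous on (0,1) with density bounded below by m_c > 0. Define r_b(u₁,u₂) = −(1/b)·log₂ P(⌊2^b X_1⌋ = ⌊2^b u₁⌋, ⌊2^b X_2⌋ = ⌊2^b u₂⌋). Then there exists a constant C (depending only on M, m, m_c, q₀) such that for every b ≥ 1 and all u₁, u₂ ∈ (0,1): 1 − C/b ≤ r_b(u₁,u₂) ≤ 2 + C/b. -/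
/-!
The event is the product of two dyadic cells of length `2⁻ᵇ`. Its probability is at most
`P(X₁ ∈ cell₁) ≤ M 2⁻ᵇ`, and at least the contribution `q₀ P(X₁ ∈ cell₁) μ_c(cell₂)` of the
continuous component, which is `≥ q₀ m m_c 2⁻²ᵇ`. Applying `-(1/b) log₂` gives both bounds with
`C = max (log₂ M) (-log₂ (q₀ m m_c))`.
-/

open MeasureTheory Set

namespace MeasureTheory.Measure

variable {α β : Type*} [MeasurableSpace α] [MeasurableSpace β]

lemma measurable_map_prodMk {κ : α → Measure β} (hκ : Measurable κ)
    [∀ x, IsFiniteMeasure (κ x)] : Measurable fun x => (κ x).map (Prod.mk x) :=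
  measurable_of_measurable_coe _ fun s hs => by
    simp_rw [map_apply measurable_prodMk_left hs]
    exact ProbabilityTheory.Kernel.measurable_kernel_prodMk_left_of_finite (κ := ⟨κ, hκ⟩) hs
      inferInstance

lemma bind_map_prodMk_apply_prod (ν : Measure α) {κ : α → Measure β} (hκ : Measurable κ)
    [∀ x, IsFiniteMeasure (κ x)] {A : Set α} {B : Set β} (hA : MeasurableSet A)
    (hB : MeasurableSet B) :
    (ν.bind fun x => (κ x).map (Prod.mk x)) (A ×ˢ B) = ∫⁻ x in A, κ x B ∂ν := by
  classical
  rw [bind_apply (hA.prod hB) (measurable_map_prodMk hκ).aemeasurable,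
    ← lintegral_indicator hA]
  refine lintegral_congr fun x => ?_
  rw [map_apply measurable_prodMk_left (hA.prod hB), mk_preimage_prod_right_eq_if]
  by_cases hx : x ∈ A <;> simp [hx]

lemma bind_map_prodMk_apply_prod_le (ν : Measure α) {κ : α → Measure β}
    (hκ : Measurable κ) [∀ x, IsProbabilityMeasure (κ x)] {A : Set α} {B : Set β}
    (hA : MeasurableSet A) (hB : MeasurableSet B) :
    (ν.bind fun x => (κ x).map (Prod.mk x)) (A ×ˢ B) ≤ ν A := by
  rw [bind_map_prodMk_apply_prod ν hκ hA hB, ← setLIntegral_one]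
  exact setLIntegral_mono measurable_const fun x _ => prob_le_one

lemma mul_le_bind_map_prodMk_apply_prod (ν : Measure α) {κ : α → Measure β}
    (hκ : Measurable κ) [∀ x, IsFiniteMeasure (κ x)] {A : Set α} {B : Set β}
    (hA : MeasurableSet A) (hB : MeasurableSet B) {c : ENNReal} (hc : ∀ x ∈ A, c ≤ κ x B) :
    c * ν A ≤ (ν.bind fun x => (κ x).map (Prod.mk x)) (A ×ˢ B) := by
  rw [bind_map_prodMk_apply_prod ν hκ hA hB, ← setLIntegral_const]
  exact setLIntegral_mono' hA hc

end MeasureTheory.Measure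

namespace MeasureTheory

variable {α : Type*} [MeasurableSpace α] {μ : Measure α} {g : α → ENNReal} {c : ENNReal}

lemma withDensity_apply_le_mul (hg : ∀ x, g x ≤ c) (s : Set α) :
    μ.withDensity g s ≤ c * μ s := by
  calc μ.withDensity g s ≤ μ.withDensity (fun _ => c) s :=
        withDensity_mono (Filter.Eventually.of_forall hg) s
    _ = c * μ s := by rw [withDensity_const, Measure.smul_apply, smul_eq_mul]

lemma mul_le_withDensity_apply {s t : Set α} (hs : MeasurableSet s) (ht : MeasurableSet t)
    (hg : ∀ x ∈ t, c ≤ g x) : c * μ (s ∩ t) ≤ μ.withDensity g s := by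
  calc c * μ (s ∩ t) = ∫⁻ _ in s ∩ t, c ∂μ := (setLIntegral_const _ _).symm
    _ ≤ ∫⁻ x in s ∩ t, g x ∂μ := setLIntegral_mono' (hs.inter ht) fun x hx => hg x hx.2
    _ ≤ μ.withDensity g s := by
      rw [withDensity_apply _ hs]; exact lintegral_mono_set inter_subset_left

end MeasureTheory

def quantCell (b : ℕ) (u : ℝ) : Set ℝ := {z | ⌊(2 : ℝ) ^ b * z⌋ = ⌊(2 : ℝ) ^ b * u⌋}

lemma quantCell_eq_Ico (b : ℕ) (u : ℝ) :
    quantCell b u = Ico ((⌊(2 : ℝ) ^ b * u⌋ : ℝ) / 2 ^ b) ((⌊(2 : ℝ) ^ b * u⌋ + 1) / 2 ^ b) := by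
  have h2b : (0 : ℝ) < 2 ^ b := by positivity
  ext z
  simp only [quantCell, mem_ofPred_eq, mem_Ico, Int.floor_eq_iff, div_le_iff₀ h2b,
    lt_div_iff₀ h2b, mul_comm z]

lemma measurableSet_quantCell (b : ℕ) (u : ℝ) : MeasurableSet (quantCell b u) := by
  rw [quantCell_eq_Ico]; exact measurableSet_Ico

lemma volume_quantCell (b : ℕ) (u : ℝ) : volume (quantCell b u) = ENNReal.ofReal (2 ^ b)⁻¹ := by
  rw [quantCell_eq_Ico, Real.volume_Ico]
  congr 1
  field_simp
  ring

lemma volume_quantCell_inter_Ioo {b : ℕ} {u : ℝ} (hu : u ∈ Ioo (0 : ℝ) 1) :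
    volume (quantCell b u ∩ Ioo 0 1) = ENNReal.ofReal (2 ^ b)⁻¹ := by
  set k := ⌊(2 : ℝ) ^ b * u⌋
  have h2b : (0 : ℝ) < 2 ^ b := by positivity
  have hk0 : (0 : ℝ) ≤ k := by exact_mod_cast Int.floor_nonneg.2 (by nlinarith [hu.1])
  have hk1 : (k : ℝ) + 1 ≤ 2 ^ b := by
    have : k < (2 : ℤ) ^ b := Int.floor_lt.2 (by push_cast; nlinarith [hu.2])
    exact_mod_cast Int.add_one_le_iff.2 this
  refine le_antisymm (volume_quantCell b u ▸ measure_mono inter_subset_left) ?_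
  calc ENNReal.ofReal (2 ^ b)⁻¹ = volume (Ioo (k / 2 ^ b : ℝ) ((k + 1) / 2 ^ b)) := by
        rw [Real.volume_Ioo]; congr 1; field_simp; ring
    _ ≤ volume (quantCell b u ∩ Ioo 0 1) := by
        refine measure_mono (subset_inter (quantCell_eq_Ico b u ▸ Ioo_subset_Ico_self) ?_)
        refine Ioo_subset_Ioo (by positivity) ?_
        rwa [div_le_one h2b]

lemma withDensity_quantCell_le {g : ℝ → ENNReal} {M : ℝ} (hg : ∀ y, g y ≤ ENNReal.ofReal M)
    (b : ℕ) (u : ℝ) :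
    volume.withDensity g (quantCell b u) ≤ ENNReal.ofReal (M * ((2 : ℝ) ^ b)⁻¹) := by
  rw [ENNReal.ofReal_mul' (by positivity), ← volume_quantCell b u]
  exact withDensity_apply_le_mul hg _

lemma le_withDensity_quantCell {g : ℝ → ENNReal} {m : ℝ}
    (hg : ∀ y ∈ Ioo (0 : ℝ) 1, ENNReal.ofReal m ≤ g y) (b : ℕ) {u : ℝ} (hu : u ∈ Ioo (0 : ℝ) 1) :
    ENNReal.ofReal (m * ((2 : ℝ) ^ b)⁻¹) ≤ volume.withDensity g (quantCell b u) := by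
  rw [ENNReal.ofReal_mul' (by positivity), ← volume_quantCell_inter_Ioo hu]
  exact mul_le_withDensity_apply (measurableSet_quantCell b u) measurableSet_Ioo hg

section Mixture

variable {α β : Type*} [MeasurableSpace β]

noncomputable def mixtureLaw (m' : ℕ) (q : ℕ → ℝ) (μc : Measure β) (f : ℕ → α → β) (x : α) :
    Measure β :=
  ENNReal.ofReal (q 0) • μc + ∑ p ∈ Finset.Icc 1 m', ENNReal.ofReal (q p) • Measure.dirac (f p x)

lemma measurable_mixtureLaw [MeasurableSpace α] (m' : ℕ) (q : ℕ → ℝ) (μc : Measure β)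
    {f : ℕ → α → β} (hf : ∀ p ∈ Finset.Icc 1 m', Measurable (f p)) : Measurable (mixtureLaw m' q μc f) := by
  refine measurable_const.add (Finset.measurable_sum _ fun p hp => ?_)
  refine Measure.measurable_of_measurable_coe _ fun s hs => ?_
  simp only [Measure.smul_apply, smul_eq_mul]
  exact ((Measure.measurable_coe hs).comp (Measure.measurable_dirac.comp (hf p hp))).const_mul _

lemma isProbabilityMeasure_mixtureLaw {m' : ℕ} {q : ℕ → ℝ}
    (hq : ∀ p ∈ Finset.range (m' + 1), 0 ≤ q p) (hqsum : ∑ p ∈ Finset.range (m' + 1), q p = 1)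
    (μc : Measure β) [IsProbabilityMeasure μc] (f : ℕ → α → β) (x : α) :
    IsProbabilityMeasure (mixtureLaw m' q μc f x) := by
  have hrange : Finset.range (m' + 1) = insert 0 (Finset.Icc 1 m') := by
    ext p; simp only [Finset.mem_range, Finset.mem_insert, Finset.mem_Icc]; omega
  rw [hrange] at hq hqsum
  rw [Finset.sum_insert (by simp)] at hqsum
  constructor
  simp only [mixtureLaw, Measure.add_apply, Measure.smul_apply, smul_eq_mul,
    Measure.finsetSum_apply, measure_univ, mul_one]
  rw [← ENNReal.ofReal_sum_of_nonneg fun p hp => hq p (Finset.mem_insert_of_mem hp),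
    ← ENNReal.ofReal_add (hq 0 (Finset.mem_insert_self _ _))
      (Finset.sum_nonneg fun p hp => hq p (Finset.mem_insert_of_mem hp)), hqsum,
    ENNReal.ofReal_one]

lemma ofReal_mul_le_mixtureLaw_apply (m' : ℕ) (q : ℕ → ℝ) (μc : Measure β) (f : ℕ → α → β)
    (x : α) (s : Set β) : ENNReal.ofReal (q 0) * μc s ≤ mixtureLaw m' q μc f x s := by
  simp only [mixtureLaw, Measure.add_apply, Measure.smul_apply, smul_eq_mul]
  exact le_self_add

end Mixture

lemma bind_map_prodMk_quantCell_prod_le {κ : ℝ → Measure ℝ} (hκ : Measurable κ)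
    [∀ x, IsProbabilityMeasure (κ x)] {g : ℝ → ENNReal} {M : ℝ}
    (hg : ∀ y, g y ≤ ENNReal.ofReal M) (b : ℕ) (u₁ u₂ : ℝ) :
    ((volume.withDensity g).bind fun x => (κ x).map (Prod.mk x))
        (quantCell b u₁ ×ˢ quantCell b u₂) ≤ ENNReal.ofReal (M * ((2 : ℝ) ^ b)⁻¹) :=
  (Measure.bind_map_prodMk_apply_prod_le _ hκ (measurableSet_quantCell b u₁)
    (measurableSet_quantCell b u₂)).trans (withDensity_quantCell_le hg b u₁)

lemma ofReal_le_bind_map_prodMk_quantCell_prod {κ : ℝ → Measure ℝ} (hκ : Measurable κ)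
    [∀ x, IsFiniteMeasure (κ x)] {a mc mlo : ℝ} (ha : 0 ≤ a) (hmc : 0 ≤ mc)
    {πc g : ℝ → ENNReal} (hκa : ∀ x s, ENNReal.ofReal a * volume.withDensity πc s ≤ κ x s)
    (hπc : ∀ y ∈ Ioo (0 : ℝ) 1, ENNReal.ofReal mc ≤ πc y)
    (hg : ∀ y ∈ Ioo (0 : ℝ) 1, ENNReal.ofReal mlo ≤ g y) (b : ℕ) {u₁ u₂ : ℝ}
    (hu₁ : u₁ ∈ Ioo (0 : ℝ) 1) (hu₂ : u₂ ∈ Ioo (0 : ℝ) 1) :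
    ENNReal.ofReal (a * mlo * mc * (((2 : ℝ) ^ b)⁻¹) ^ 2) ≤
      ((volume.withDensity g).bind fun x => (κ x).map (Prod.mk x))
        (quantCell b u₁ ×ˢ quantCell b u₂) := by
  set ε := ((2 : ℝ) ^ b)⁻¹
  calc ENNReal.ofReal (a * mlo * mc * ε ^ 2)
      = ENNReal.ofReal a * ENNReal.ofReal (mc * ε) * ENNReal.ofReal (mlo * ε) := by
        rw [show a * mlo * mc * ε ^ 2 = a * (mc * ε) * (mlo * ε) by ring,
          ENNReal.ofReal_mul (by positivity), ENNReal.ofReal_mul ha]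
    _ ≤ ENNReal.ofReal a * volume.withDensity πc (quantCell b u₂) *
          volume.withDensity g (quantCell b u₁) := by
        gcongr
        · exact le_withDensity_quantCell hπc b hu₂
        · exact le_withDensity_quantCell hg b hu₁
    _ ≤ _ := Measure.mul_le_bind_map_prodMk_apply_prod _ hκ (measurableSet_quantCell b u₁)
          (measurableSet_quantCell b u₂) fun x _ => hκa x _

lemma logb_two_inv_two_pow (b : ℕ) : Real.logb 2 ((2 : ℝ) ^ b)⁻¹ = -b := by
  rw [Real.logb_inv, Real.logb_pow, Real.logb_self_eq_one one_lt_two, mul_one]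

lemma one_sub_div_le_neg_inv_mul_logb {b : ℕ} (hb : 0 < b) {P M : ℝ} (hP : 0 < P)
    (hPM : P ≤ M * ((2 : ℝ) ^ b)⁻¹) : 1 - Real.logb 2 M / b ≤ -(1 / b : ℝ) * Real.logb 2 P := by
  have hb' : (0 : ℝ) < b := by exact_mod_cast hb
  have hM : 0 < M := pos_of_mul_pos_left (hP.trans_le hPM) (by positivity)
  have hlog : Real.logb 2 P ≤ Real.logb 2 M - b := by
    calc Real.logb 2 P ≤ Real.logb 2 (M * ((2 : ℝ) ^ b)⁻¹) :=
          Real.logb_le_logb_of_le one_lt_two hP hPM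
      _ = Real.logb 2 M - b := by
          rw [Real.logb_mul hM.ne' (by positivity), logb_two_inv_two_pow, sub_eq_add_neg]
  rw [show -(1 / b : ℝ) * Real.logb 2 P = -Real.logb 2 P / b by ring, le_div_iff₀ hb',
    sub_mul, one_mul, div_mul_cancel₀ _ hb'.ne']
  linarith

lemma neg_inv_mul_logb_le_two_add_div {b : ℕ} (hb : 0 < b) {P c : ℝ} (hc : 0 < c)
    (hcP : c * (((2 : ℝ) ^ b)⁻¹) ^ 2 ≤ P) :
    -(1 / b : ℝ) * Real.logb 2 P ≤ 2 + -Real.logb 2 c / b := by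
  have hb' : (0 : ℝ) < b := by exact_mod_cast hb
  have hlog : Real.logb 2 c - 2 * b ≤ Real.logb 2 P := by
    calc Real.logb 2 c - 2 * b = Real.logb 2 (c * (((2 : ℝ) ^ b)⁻¹) ^ 2) := by
          rw [Real.logb_mul hc.ne' (by positivity), Real.logb_pow, logb_two_inv_two_pow]
          push_cast; ring
      _ ≤ Real.logb 2 P := Real.logb_le_logb_of_le one_lt_two (by positivity) hcP
  rw [show -(1 / b : ℝ) * Real.logb 2 P = -Real.logb 2 P / b by ring, div_le_iff₀ hb',
    add_mul, div_mul_cancel₀ _ hb'.ne']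
  linarith

theorem stmt_9_general (m' : ℕ) (q : ℕ → ℝ)
    (hq : ∀ p ∈ Finset.range (m' + 1), 0 < q p)
    (hqsum : ∑ p ∈ Finset.range (m' + 1), q p = 1)
    (μc : Measure ℝ) [IsProbabilityMeasure μc]
    (πc : ℝ → ENNReal) (hμc_dens : μc = volume.withDensity πc)
    (mc : ℝ) (hmc : 0 < mc)
    (hπclo : ∀ y ∈ Set.Ioo (0 : ℝ) 1, ENNReal.ofReal mc ≤ πc y)
    (f : ℕ → ℝ → ℝ) (hfm : ∀ p ∈ Finset.Icc 1 m', Measurable (f p))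
    (ν : Measure ℝ)
    (g : ℝ → ENNReal) (hν_dens : ν = volume.withDensity g)
    (M mlo : ℝ) (hmlo : 0 < mlo)
    (hgM : ∀ y : ℝ, g y ≤ ENNReal.ofReal M)
    (hglo : ∀ y ∈ Set.Ioo (0 : ℝ) 1, ENNReal.ofReal mlo ≤ g y)
    (μ : Measure (ℝ × ℝ))
    (hμ : μ = ν.bind (fun x =>
      (ENNReal.ofReal (q 0) • μc +
        ∑ p ∈ Finset.Icc 1 m', ENNReal.ofReal (q p) • Measure.dirac (f p x)).map
        (fun y => (x, y)))) :
    ∃ C : ℝ, ∀ b : ℕ, 1 ≤ b →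
      ∀ u1 ∈ Set.Ioo (0 : ℝ) 1, ∀ u2 ∈ Set.Ioo (0 : ℝ) 1,
        1 - C / b ≤
          -(1 / b : ℝ) * Real.logb 2
            ((μ {z : ℝ × ℝ | ⌊(2 : ℝ) ^ b * z.1⌋ = ⌊(2 : ℝ) ^ b * u1⌋ ∧
                ⌊(2 : ℝ) ^ b * z.2⌋ = ⌊(2 : ℝ) ^ b * u2⌋}).toReal) ∧
        -(1 / b : ℝ) * Real.logb 2
            ((μ {z : ℝ × ℝ | ⌊(2 : ℝ) ^ b * z.1⌋ = ⌊(2 : ℝ) ^ b * u1⌋ ∧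
                ⌊(2 : ℝ) ^ b * z.2⌋ = ⌊(2 : ℝ) ^ b * u2⌋}).toReal) ≤ 2 + C / b := by
  subst hν_dens hμc_dens
  have hq0 : 0 < q 0 := hq 0 (by simp)
  have := isProbabilityMeasure_mixtureLaw (fun p hp => (hq p hp).le) hqsum
    (volume.withDensity πc) f
  have hκ := measurable_mixtureLaw m' q (volume.withDensity πc) hfm
  refine ⟨max (Real.logb 2 M) (-Real.logb 2 (q 0 * mlo * mc)), fun b hb u1 hu1 u2 hu2 => ?_⟩
  have hupper : μ (quantCell b u1 ×ˢ quantCell b u2) ≤ _ :=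
    hμ ▸ bind_map_prodMk_quantCell_prod_le hκ hgM b u1 u2
  have hlower : _ ≤ μ (quantCell b u1 ×ˢ quantCell b u2) :=
    hμ ▸ ofReal_le_bind_map_prodMk_quantCell_prod hκ hq0.le hmc.le
      (ofReal_mul_le_mixtureLaw_apply m' q _ f) hπclo hglo b hu1 hu2
  have hpos : 0 < q 0 * mlo * mc * (((2 : ℝ) ^ b)⁻¹) ^ 2 := by positivity
  have hPlo := (ENNReal.ofReal_le_iff_le_toReal
    (ne_top_of_le_ne_top ENNReal.ofReal_ne_top hupper)).1 hlower
  have hPup := ENNReal.toReal_le_of_le_ofReal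
    (ENNReal.ofReal_pos.1 ((ENNReal.ofReal_pos.2 hpos).trans_le (hlower.trans hupper))).le hupper
  constructor
  · refine le_trans ?_ (one_sub_div_le_neg_inv_mul_logb hb (hpos.trans_le hPlo) hPup)
    gcongr
    exact le_max_left _ _
  · refine (neg_inv_mul_logb_le_two_add_div hb (by positivity) hPlo).trans ?_
    gcongr
    exact le_max_right _ _

/-- Two-sided bound on the Q-MAP pair regularizer: if `X₁` has density bounded between
`mlo > 0` and `M` on `(0,1)` and the conditional law of `X₂` given `X₁ = x` is
`q₀·μ_c + Σ_p q_p·δ_{f_p(x)}` with the density of `μ_c` bounded below by `mc > 0`, then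
there is a constant `C` with `1 - C/b ≤ r_b(u₁,u₂) ≤ 2 + C/b` for all `b ≥ 1` and all
`u₁, u₂ ∈ (0,1)`. -/
theorem stmt_9 (m' : ℕ) (q : ℕ → ℝ)
    (hq : ∀ p ∈ Finset.range (m' + 1), 0 < q p)
    (hqsum : ∑ p ∈ Finset.range (m' + 1), q p = 1)
    (μc : Measure ℝ) [IsProbabilityMeasure μc]
    (hμc_supp : μc (Set.Ioo (0 : ℝ) 1)ᶜ = 0)
    (πc : ℝ → ENNReal) (hμc_dens : μc = volume.withDensity πc)
    (mc : ℝ) (hmc : 0 < mc)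
    (hπclo : ∀ y ∈ Set.Ioo (0 : ℝ) 1, ENNReal.ofReal mc ≤ πc y)
    (f : ℕ → ℝ → ℝ) (hfm : ∀ p ∈ Finset.Icc 1 m', Measurable (f p))
    (ν : Measure ℝ) [IsProbabilityMeasure ν]
    (hν_supp : ν (Set.Ioo (0 : ℝ) 1)ᶜ = 0)
    (g : ℝ → ENNReal) (hν_dens : ν = volume.withDensity g)
    (M mlo : ℝ) (hmlo : 0 < mlo)
    (hgM : ∀ y : ℝ, g y ≤ ENNReal.ofReal M)
    (hglo : ∀ y ∈ Set.Ioo (0 : ℝ) 1, ENNReal.ofReal mlo ≤ g y)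
    (μ : Measure (ℝ × ℝ))
    (hμ : μ = ν.bind (fun x =>
      (ENNReal.ofReal (q 0) • μc +
        ∑ p ∈ Finset.Icc 1 m', ENNReal.ofReal (q p) • Measure.dirac (f p x)).map
        (fun y => (x, y)))) :
    ∃ C : ℝ, ∀ b : ℕ, 1 ≤ b →
      ∀ u1 ∈ Set.Ioo (0 : ℝ) 1, ∀ u2 ∈ Set.Ioo (0 : ℝ) 1,
        1 - C / b ≤
          -(1 / b : ℝ) * Real.logb 2
            ((μ {z : ℝ × ℝ | ⌊(2 : ℝ) ^ b * z.1⌋ = ⌊(2 : ℝ) ^ b * u1⌋ ∧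
                ⌊(2 : ℝ) ^ b * z.2⌋ = ⌊(2 : ℝ) ^ b * u2⌋}).toReal) ∧
        -(1 / b : ℝ) * Real.logb 2
            ((μ {z : ℝ × ℝ | ⌊(2 : ℝ) ^ b * z.1⌋ = ⌊(2 : ℝ) ^ b * u1⌋ ∧
                ⌊(2 : ℝ) ^ b * z.2⌋ = ⌊(2 : ℝ) ^ b * u2⌋}).toReal) ≤ 2 + C / b :=
  stmt_9_general m' q hq hqsum μc πc hμc_dens mc hmc hπclo f hfm ν g hν_dens M mlo hmlo hgM hglo μ
    hμ
end

section
/- Let n ≥ 1, let g_1,...,g_n : I → ℝ be twice continuously differentiable on a compact interval I, let θ be an interior point of I with Σ_{i=1}^n g_i'(θ)² > 0, and fix ε_1,...,ε_n ∈ ℝ. For σ > 0 let θ̂(σ) be a minimizer over u ∈ I of Σ_{i=1}^n (g_i(θ) + σ·ε_i − g_i(u))², and assume θ̂(σ) → θ as σ → 0. Then lim_{σ→0} (θ̂(σ) − θ)/σ = (Σ_{i=1}^n ε_i·g_i'(θ)) / (Σ_{i=1}^n g_i'(θ)²). -/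
open Filter Topology

/-! The score `h u = ∑ i, (gᵢ u - gᵢ θ) gᵢ'(u)` vanishes at `θ` with `h'(θ) = ∑ i, gᵢ'(θ)² ≠ 0`,
and the first-order condition at the (eventually interior) minimizer reads
`h(θ̂) = σ ∑ i, εᵢ gᵢ'(θ̂)`. Factoring `h(θ̂) = (θ̂ - θ) · dslope h θ θ̂` and dividing by `σ`,
the slope tends to `h'(θ)` and the right-hand side to `∑ i, εᵢ gᵢ'(θ)`. -/

theorem HasDerivAt.tendsto_sub_div_of_eventually_eq_mul {α : Type*} {l : Filter α}
    {h : ℝ → ℝ} {h' θ R : ℝ} (hh : HasDerivAt h h' θ) (hθ : h θ = 0) (hh' : h' ≠ 0)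
    {u σ r : α → ℝ} (hu : Tendsto u l (𝓝 θ)) (hr : Tendsto r l (𝓝 R))
    (hσ : ∀ᶠ x in l, σ x ≠ 0) (hfoc : ∀ᶠ x in l, h (u x) = σ x * r x) :
    Tendsto (fun x => (u x - θ) / σ x) l (𝓝 (R / h')) := by
  have hslope : Tendsto (fun x => dslope h θ (u x)) l (𝓝 h') := by
    have hcont := continuousAt_dslope_same.mpr hh.differentiableAt
    rw [ContinuousAt, dslope_same, hh.deriv] at hcont
    exact hcont.comp hu
  refine (hr.div hslope hh').congr' ?_
  filter_upwards [hσ, hfoc, hslope.eventually_ne hh'] with x hσx hx hsx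
  have hfactor : (u x - θ) * dslope h θ (u x) = σ x * r x := by
    rw [← smul_eq_mul, sub_smul_dslope, hθ, sub_zero, hx]
  rw [Pi.div_apply, div_eq_div_iff hsx hσx, hfactor]
  ring

theorem IsLocalMin.sum_sub_mul_deriv_eq_zero {ι : Type*} [Fintype ι] {g : ι → ℝ → ℝ}
    {y : ι → ℝ} {u : ℝ} (hg : ∀ i, DifferentiableAt ℝ (g i) u)
    (hmin : IsLocalMin (fun v => ∑ i, (y i - g i v) ^ 2) u) :
    ∑ i, (y i - g i u) * deriv (g i) u = 0 := by
  have hF : HasDerivAt (fun v => ∑ i, (y i - g i v) ^ 2)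
      (∑ i, (2 : ℝ) * (y i - g i u) ^ 1 * (0 - deriv (g i) u)) u :=
    HasDerivAt.fun_sum fun i _ => ((hasDerivAt_const u (y i)).sub (hg i).hasDerivAt).pow 2
  have hzero := hmin.hasDerivAt_eq_zero hF
  simp only [pow_one, zero_sub, mul_neg, Finset.sum_neg_distrib, neg_eq_zero] at hzero
  simpa [mul_assoc, ← Finset.mul_sum] using hzero

theorem ContDiffOn.differentiableAt_deriv {g : ℝ → ℝ} {s : Set ℝ} {x : ℝ}
    (hg : ContDiffOn ℝ 2 g s) (hs : IsOpen s) (hx : x ∈ s) :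
    DifferentiableAt ℝ (deriv g) x :=
  ((hg.deriv_of_isOpen hs (by norm_num)).differentiableOn one_ne_zero).differentiableAt
    (hs.mem_nhds hx)

theorem hasDerivAt_sum_sub_mul_deriv {ι : Type*} [Fintype ι] {g : ι → ℝ → ℝ} {θ : ℝ}
    (hg : ∀ i, DifferentiableAt ℝ (g i) θ) (hg' : ∀ i, DifferentiableAt ℝ (deriv (g i)) θ) :
    HasDerivAt (fun u => ∑ i, (g i u - g i θ) * deriv (g i) u) (∑ i, deriv (g i) θ ^ 2) θ := by
  have H := HasDerivAt.fun_sum (u := Finset.univ) fun i _ =>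
    ((hg i).hasDerivAt.sub_const (g i θ)).mul (hg' i).hasDerivAt
  simpa [sq] using H

theorem stmt_12_general (n : ℕ) (a c : ℝ)
    (g : Fin n → ℝ → ℝ) (hg : ∀ i, ContDiffOn ℝ 2 (g i) (Set.Icc a c))
    (θ : ℝ) (hθ : θ ∈ Set.Ioo a c)
    (hnd : 0 < ∑ i, (deriv (g i) θ) ^ 2)
    (ε : Fin n → ℝ)
    (θhat : ℝ → ℝ)
    (hmin : ∀ σ : ℝ, 0 < σ → ∀ u ∈ Set.Icc a c,
      ∑ i, (g i θ + σ * ε i - g i (θhat σ)) ^ 2 ≤ ∑ i, (g i θ + σ * ε i - g i u) ^ 2)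
    (hconv : Tendsto θhat (nhdsWithin 0 (Set.Ioi 0)) (nhds θ)) :
    Tendsto (fun σ => (θhat σ - θ) / σ) (nhdsWithin 0 (Set.Ioi 0))
      (nhds ((∑ i, ε i * deriv (g i) θ) / (∑ i, (deriv (g i) θ) ^ 2))) := by
  have hg_Ioo : ∀ i, ContDiffOn ℝ 2 (g i) (Set.Ioo a c) :=
    fun i => (hg i).mono Set.Ioo_subset_Icc_self
  have hdiff : ∀ i, ∀ x ∈ Set.Ioo a c, DifferentiableAt ℝ (g i) x := fun i x hx =>
    ((hg_Ioo i).differentiableOn two_ne_zero).differentiableAt (isOpen_Ioo.mem_nhds hx)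
  have hdiff' : ∀ i, DifferentiableAt ℝ (deriv (g i)) θ :=
    fun i => (hg_Ioo i).differentiableAt_deriv isOpen_Ioo hθ
  have hfoc : ∀ᶠ σ in 𝓝[>] 0, ∑ i, (g i (θhat σ) - g i θ) * deriv (g i) (θhat σ) =
      σ * ∑ i, ε i * deriv (g i) (θhat σ) := by
    filter_upwards [self_mem_nhdsWithin, hconv.eventually (isOpen_Ioo.mem_nhds hθ)]
      with σ hσ hu
    have hloc : IsLocalMin (fun v => ∑ i, (g i θ + σ * ε i - g i v) ^ 2) (θhat σ) :=
      mem_of_superset (Icc_mem_nhds hu.1 hu.2) fun v hv => hmin σ hσ v hv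
    have hcrit := hloc.sum_sub_mul_deriv_eq_zero (hdiff · _ hu)
    rw [Finset.mul_sum, ← sub_eq_zero, ← neg_eq_zero.mpr hcrit, ← Finset.sum_neg_distrib,
      ← Finset.sum_sub_distrib]
    exact Finset.sum_congr rfl fun i _ => by ring
  have hr : Tendsto (fun σ => ∑ i, ε i * deriv (g i) (θhat σ)) (𝓝[>] 0)
      (𝓝 (∑ i, ε i * deriv (g i) θ)) :=
    tendsto_finsetSum _ fun i _ =>
      ((hdiff' i).continuousAt.tendsto.comp hconv).const_mul (ε i)
  exact (hasDerivAt_sum_sub_mul_deriv (hdiff · θ hθ) hdiff').tendsto_sub_div_of_eventually_eq_mul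
    (by simp) hnd.ne' hconv hr (eventually_mem_nhdsWithin.mono fun σ hσ => hσ.ne') hfoc

/-- Deterministic first-order expansion of the nonlinear least-squares estimator in the
low-noise limit: `(θ̂(σ) - θ)/σ → (Σ εᵢ gᵢ'(θ)) / (Σ gᵢ'(θ)²)` as `σ → 0⁺`. -/
theorem stmt_12 (n : ℕ) (hn : 1 ≤ n) (a c : ℝ) (hac : a < c)
    (g : Fin n → ℝ → ℝ) (hg : ∀ i, ContDiffOn ℝ 2 (g i) (Set.Icc a c))
    (θ : ℝ) (hθ : θ ∈ Set.Ioo a c)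
    (hnd : 0 < ∑ i, (deriv (g i) θ) ^ 2)
    (ε : Fin n → ℝ)
    (θhat : ℝ → ℝ)
    (hmem : ∀ σ : ℝ, 0 < σ → θhat σ ∈ Set.Icc a c)
    (hmin : ∀ σ : ℝ, 0 < σ → ∀ u ∈ Set.Icc a c,
      ∑ i, (g i θ + σ * ε i - g i (θhat σ)) ^ 2 ≤ ∑ i, (g i θ + σ * ε i - g i u) ^ 2)
    (hconv : Tendsto θhat (nhdsWithin 0 (Set.Ioi 0)) (nhds θ)) :
    Tendsto (fun σ => (θhat σ - θ) / σ) (nhdsWithin 0 (Set.Ioi 0))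
      (nhds ((∑ i, ε i * deriv (g i) θ) / (∑ i, (deriv (g i) θ) ^ 2))) :=
  stmt_12_general n a c g hg θ hθ hnd ε θhat hmin hconv
end

section
/- Let b ∈ ℕ, let L be a positive integer, let f : ℝ → ℝ be L-Lipschitz, and let u ∈ ℝ. Let I = [2^{−b}⌊2^b u⌋, 2^{−b}⌊2^b u⌋ + 2^{−b}) be the quantization cell of u. Then there exists an integer i* with |i*| ≤ L such that the Lebesgue measure of the set {x ∈ I : ⌊2^b f(x)⌋ = ⌊2^b f(u)⌋ + i*} is at least 2^{−b}/(2L+1). -/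
open MeasureTheory

/-!
Points of the cell `I` of `u` are within `2^{-b}` of `u`, so the Lipschitz bound puts the quantized
values `⌊2^b f(x)⌋`, `x ∈ I`, within `L` of `⌊2^b f(u)⌋`. Hence the `2L+1` level sets
`{x ∈ I | ⌊2^b f(x)⌋ = ⌊2^b f(u)⌋ + i}`, `|i| ≤ L`, cover `I`, and by subadditivity one of them
carries at least a `1/(2L+1)` share of its measure `2^{-b}`.
-/

theorem MeasureTheory.exists_measure_div_card_le {α ι : Type*} [MeasurableSpace α]
    (μ : Measure α) {s : Set α} {t : Finset ι} (ht : t.Nonempty) {S : ι → Set α}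
    (hs : s ⊆ ⋃ i ∈ t, S i) : ∃ i ∈ t, μ s / t.card ≤ μ (S i) := by
  apply ENNReal.exists_le_of_sum_le ht
  calc ∑ _i ∈ t, μ s / t.card = t.card * (μ s / t.card) := by
        rw [Finset.sum_const, nsmul_eq_mul]
    _ ≤ μ s := ENNReal.mul_div_le
    _ ≤ μ (⋃ i ∈ t, S i) := measure_mono hs
    _ ≤ ∑ i ∈ t, μ (S i) := measure_biUnion_finset_le t S

theorem Int.abs_floor_sub_floor_le {R : Type*} [CommRing R] [LinearOrder R] [IsStrictOrderedRing R]
    [FloorRing R] {y z : R} {n : ℤ} (h : |y - z| ≤ n) : |⌊y⌋ - ⌊z⌋| ≤ n := by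
  have floor_sub_le {y z : R} (h : y ≤ z + n) : ⌊y⌋ - ⌊z⌋ ≤ n := by
    have := Int.floor_le_floor h
    rw [Int.floor_add_intCast] at this
    omega
  rw [abs_le] at h ⊢
  constructor
  · linarith [floor_sub_le (y := z) (z := y) (by linarith)]
  · exact floor_sub_le (by linarith)

theorem Int.mem_Ico_floor_div {k : Type*} [Field k] [LinearOrder k] [IsStrictOrderedRing k]
    [FloorRing k] {a : k} (ha : 0 < a) (u : k) :
    u ∈ Set.Ico ((⌊a * u⌋ : k) / a) ((⌊a * u⌋ : k) / a + a⁻¹) := by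
  constructor
  · rw [div_le_iff₀' ha]
    exact Int.floor_le _
  · rw [← one_div, ← add_div, lt_div_iff₀' ha]
    exact Int.lt_floor_add_one _

theorem LipschitzWith.abs_floor_mul_sub_floor_mul_le {f : ℝ → ℝ} {L : ℕ}
    (hf : LipschitzWith (L : NNReal) f) {a x u : ℝ} (ha : 0 < a) (hxu : |x - u| ≤ a⁻¹) :
    |⌊a * f x⌋ - ⌊a * f u⌋| ≤ L := by
  apply Int.abs_floor_sub_floor_le
  have hfxu : |f x - f u| ≤ L * |x - u| := by
    simpa only [Real.dist_eq, NNReal.coe_natCast] using hf.dist_le_mul x u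
  calc |a * f x - a * f u| = a * |f x - f u| := by rw [← mul_sub, abs_mul, abs_of_pos ha]
    _ ≤ a * (L * a⁻¹) := by gcongr; exact hfxu.trans (by gcongr)
    _ = ((L : ℤ) : ℝ) := by field_simp; norm_cast

theorem stmt_16_general (b : ℕ) (L : ℕ) (f : ℝ → ℝ)
    (hf : LipschitzWith (L : NNReal) f) (u : ℝ) :
    ∃ istar : ℤ, |istar| ≤ (L : ℤ) ∧
      ENNReal.ofReal ((2 : ℝ) ^ (-(b : ℤ)) / (2 * L + 1)) ≤
        volume {x ∈ Set.Ico ((⌊(2 : ℝ) ^ b * u⌋ : ℝ) / 2 ^ b)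
            ((⌊(2 : ℝ) ^ b * u⌋ : ℝ) / 2 ^ b + (2 : ℝ) ^ (-(b : ℤ))) |
          ⌊(2 : ℝ) ^ b * f x⌋ = ⌊(2 : ℝ) ^ b * f u⌋ + istar} := by
  have ha : (0 : ℝ) < 2 ^ b := by positivity
  rw [zpow_neg, zpow_natCast]
  set I := Set.Ico ((⌊(2 : ℝ) ^ b * u⌋ : ℝ) / 2 ^ b) ((⌊(2 : ℝ) ^ b * u⌋ : ℝ) / 2 ^ b + (2 ^ b)⁻¹)
  have hcover : I ⊆ ⋃ i ∈ Finset.Icc (-(L : ℤ)) L,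
      {x ∈ I | ⌊(2 : ℝ) ^ b * f x⌋ = ⌊(2 : ℝ) ^ b * f u⌋ + i} := by
    intro x hx
    have hxu : |x - u| ≤ (2 ^ b)⁻¹ := by
      simpa [Real.dist_eq] using Real.dist_le_of_mem_Icc (Set.Ico_subset_Icc_self hx)
        (Set.Ico_subset_Icc_self (Int.mem_Ico_floor_div ha u))
    have hfloor := abs_le.mp (hf.abs_floor_mul_sub_floor_mul_le ha hxu)
    exact Set.mem_biUnion (Finset.mem_Icc.mpr hfloor) ⟨hx, by ring⟩
  obtain ⟨i, hi, hle⟩ := exists_measure_div_card_le volume ⟨0, by simp⟩ hcover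
  refine ⟨i, abs_le.mpr (Finset.mem_Icc.mp hi), le_trans (le_of_eq ?_) hle⟩
  rw [Int.card_Icc, Real.volume_Ico, add_sub_cancel_left, ENNReal.ofReal_div_of_pos (by positivity)]
  congr 1
  rw [show L + 1 - -(L : ℤ) = ((2 * L + 1 : ℕ) : ℤ) by push_cast; ring, Int.toNat_natCast]
  exact_mod_cast ENNReal.ofReal_natCast (2 * L + 1)

/-- Measure-theoretic pigeonhole step for the Q-MAP pair regularizer: if `f` is
`L`-Lipschitz (`L` a positive integer), then inside the quantization cell `I` of `u`
(a dyadic interval of width `2^{-b}`) there is some shift `i*` with `|i*| ≤ L` such that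
the set of points of `I` whose image quantizes to cell `⌊2^b f(u)⌋ + i*` has Lebesgue
measure at least `2^{-b}/(2L+1)`. -/
theorem stmt_16 (b : ℕ) (L : ℕ) (hL : 0 < L) (f : ℝ → ℝ)
    (hf : LipschitzWith (L : NNReal) f) (u : ℝ) :
    ∃ istar : ℤ, |istar| ≤ (L : ℤ) ∧
      ENNReal.ofReal ((2 : ℝ) ^ (-(b : ℤ)) / (2 * L + 1)) ≤
        volume {x ∈ Set.Ico ((⌊(2 : ℝ) ^ b * u⌋ : ℝ) / 2 ^ b)
            ((⌊(2 : ℝ) ^ b * u⌋ : ℝ) / 2 ^ b + (2 : ℝ) ^ (-(b : ℤ))) |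
          ⌊(2 : ℝ) ^ b * f x⌋ = ⌊(2 : ℝ) ^ b * f u⌋ + istar} :=
  stmt_16_general b L f hf u
end
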